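/- arXiv:1807.01041 — 4 statements merged into one kernel-verified Lean document; each statement's English description precedes it below -/
import Mathlib

section
/- Let G be an abelian group, H a subgroup of G, and F an abelian group. If τ' : H × H → F is a symmetric 2-cocycle, then there exists a symmetric 2-cocycle τ : G × G → F whose restriction to H × H equals τ'. -/
/-! Embed `F` into a divisible group `D`. With divisible coefficients every symmetric cocycle is
a coboundary `δφ`, because the abelian extension it classifies splits (`D` is injective). Modulo
`F` the cochain `φ : H → D` is a homomorphism into the divisible group `D ⧸ F`, so it extends
to `G`; lifting this extension back to `ℓ : G → D` so that `ℓ = φ` on `H`, the coboundary `δℓ`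
takes values in `F` and restricts to `τ'` on `H`. -/

open Function

section

variable {A B M N : Type*} [AddCommGroup A] [AddCommGroup B] [AddCommGroup M] [AddCommGroup N]

structure IsSymmCocycle (σ : A → A → M) : Prop where
  cocycle : ∀ a b c, σ a b + σ (a + b) c = σ a (b + c) + σ b c
  symm : ∀ a b, σ a b = σ b a

def coboundary (φ : A → M) (a b : A) : M := φ a + φ b - φ (a + b)

theorem isSymmCocycle_coboundary (φ : A → M) : IsSymmCocycle (coboundary φ) where
  cocycle a b c := by simp only [coboundary, add_assoc]; abel
  symm a b := by simp only [coboundary, add_comm]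

theorem isSymmCocycle_comp_iff {f : M →+ N} (hf : Injective f) {σ : A → A → M} :
    IsSymmCocycle (fun a b => f (σ a b)) ↔ IsSymmCocycle σ := by
  constructor
  · rintro ⟨hc, hs⟩
    exact ⟨fun a b c => hf (by simpa only [map_add] using hc a b c), fun a b => hf (hs a b)⟩
  · rintro ⟨hc, hs⟩
    exact ⟨fun a b c => by simp only [← map_add, hc], fun a b => by rw [hs]⟩

namespace IsSymmCocycle

variable {σ : A → A → M}

theorem apply_zero_left (hσ : IsSymmCocycle σ) (a : A) : σ 0 a = σ 0 0 := by
  have h := hσ.cocycle 0 0 a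
  rw [zero_add, zero_add] at h
  exact (add_right_cancel h).symm

/-- The extension of `A` by `M` classified by `σ`. As `σ` need not be normalised, its zero is
`(-σ 0 0, 0)` and `M` embeds by `m ↦ (m - σ 0 0, 0)`. -/
def Extension (_ : IsSymmCocycle σ) : Type _ := M × A

namespace Extension

variable (hσ : IsSymmCocycle σ)

instance : Add hσ.Extension := ⟨fun x y => (x.1 + y.1 + σ x.2 y.2, x.2 + y.2)⟩
instance : Zero hσ.Extension := ⟨(-σ 0 0, 0)⟩
instance : Neg hσ.Extension := ⟨fun x => (-x.1 - σ (-x.2) x.2 - σ 0 0, -x.2)⟩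

instance : AddCommGroup hσ.Extension :=
  { AddGroup.ofLeftAxioms (G := hσ.Extension)
      (fun x y z => Prod.ext (by
          show x.1 + y.1 + σ x.2 y.2 + z.1 + σ (x.2 + y.2) z.2
            = x.1 + (y.1 + z.1 + σ y.2 z.2) + σ x.2 (y.2 + z.2)
          calc _ = x.1 + y.1 + z.1 + (σ x.2 y.2 + σ (x.2 + y.2) z.2) := by abel
            _ = _ := by rw [hσ.cocycle]; abel) (add_assoc _ _ _))
      (fun x => Prod.ext (by
          show -σ 0 0 + x.1 + σ 0 x.2 = x.1
          rw [hσ.apply_zero_left x.2]; abel) (zero_add _))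
      (fun x => Prod.ext (by
          show -x.1 - σ (-x.2) x.2 - σ 0 0 + x.1 + σ (-x.2) x.2 = -σ 0 0
          abel) (neg_add_cancel _)) with
    add_comm := fun x y => Prod.ext (by
      show x.1 + y.1 + σ x.2 y.2 = y.1 + x.1 + σ y.2 x.2
      rw [hσ.symm, add_comm x.1]) (add_comm _ _) }

def inl : M →+ hσ.Extension where
  toFun m := (m - σ 0 0, 0)
  map_zero' := by
    show ((0 : M) - σ 0 0, (0 : A)) = (-σ 0 0, 0)
    rw [zero_sub]
  map_add' m n := Prod.ext (by
    show m + n - σ 0 0 = m - σ 0 0 + (n - σ 0 0) + σ 0 0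
    abel) (zero_add _).symm

theorem inl_injective : Injective (inl hσ) := fun _ _ h =>
  sub_left_injective (congrArg Prod.fst h)

def sec (a : A) : hσ.Extension := (0, a)

theorem sec_add_sec (a b : A) : sec hσ a + sec hσ b = inl hσ (σ a b) + sec hσ (a + b) :=
  Prod.ext (by
    show 0 + 0 + σ a b = σ a b - σ 0 0 + 0 + σ 0 (a + b)
    rw [hσ.apply_zero_left (a + b)]; abel) (zero_add _).symm

end Extension

theorem exists_eq_coboundary [DivisibleBy M ℤ] (hσ : IsSymmCocycle σ) :
    ∃ φ : A → M, ∀ a b, σ a b = coboundary φ a b := by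
  obtain ⟨r, hr⟩ := (Module.Baer.of_divisible M).extension_property_addMonoidHom
    (Extension.inl hσ) (Extension.inl_injective hσ) (AddMonoidHom.id M)
  refine ⟨fun a => r (Extension.sec hσ a), fun a b => ?_⟩
  have h := congrArg r (Extension.sec_add_sec hσ a b)
  rw [map_add, map_add, ← AddMonoidHom.comp_apply r, hr, AddMonoidHom.id_apply] at h
  rw [coboundary, h, add_sub_cancel_right]

end IsSymmCocycle

universe u in
theorem exists_injective_addMonoidHom_divisible (M : Type u) [AddCommGroup M] :
    ∃ (D : Type u) (_ : AddCommGroup D) (_ : DivisibleBy D ℤ) (j : M →+ D), Injective j := by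
  refine ⟨CharacterModule M → AddCircle (1 : ℚ), inferInstance, inferInstance,
    { toFun := fun m c => c m, map_zero' := by ext; simp, map_add' := by intros; ext; simp }, ?_⟩
  refine (injective_iff_map_eq_zero _).mpr fun m hm => ?_
  exact CharacterModule.eq_zero_of_character_apply fun c => congrFun hm c

theorem Function.Injective.exists_extend_lift {α β γ δ : Type*} {i : α → β} (hi : Injective i)
    {π : γ → δ} (hπ : Surjective π) {χ : β → δ} {φ : α → γ} (h : ∀ a, π (φ a) = χ (i a)) :
    ∃ ℓ : β → γ, (∀ b, π (ℓ b) = χ b) ∧ ∀ a, ℓ (i a) = φ a := by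
  refine ⟨extend i φ (surjInv hπ ∘ χ), fun b => ?_, hi.extend_apply _ _⟩
  by_cases hb : ∃ a, i a = b
  · obtain ⟨a, rfl⟩ := hb
    rw [hi.extend_apply, h]
  · rw [extend_apply' _ _ _ hb]
    exact surjInv_eq hπ _

theorem IsSymmCocycle.exists_extend {σ : A → A → M} (hσ : IsSymmCocycle σ) {i : A →+ B}
    (hi : Injective i) : ∃ τ : B → B → M, IsSymmCocycle τ ∧ ∀ a b, τ (i a) (i b) = σ a b := by
  obtain ⟨D, _, _, j, hj⟩ := exists_injective_addMonoidHom_divisible M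
  obtain ⟨φ, hφ⟩ := ((isSymmCocycle_comp_iff hj).mpr hσ).exists_eq_coboundary
  let π := QuotientAddGroup.mk' j.range
  have hπj : ∀ m, π (j m) = 0 := fun m => (QuotientAddGroup.eq_zero_iff _).mpr ⟨m, rfl⟩
  let ψ : A →+ D ⧸ j.range := AddMonoidHom.mk' (fun a => π (φ a)) fun a b => by
    have h := congrArg π (hφ a b)
    rwa [hπj, coboundary, map_sub, map_add, eq_comm, sub_eq_zero, eq_comm] at h
  have : DivisibleBy (D ⧸ j.range) ℤ :=
    QuotientAddGroup.mk_surjective.divisibleBy _ fun _ _ => rfl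
  obtain ⟨χ, hχ⟩ := (Module.Baer.of_divisible _).extension_property_addMonoidHom i hi ψ
  obtain ⟨ℓ, hπℓ, hℓi⟩ := hi.exists_extend_lift (χ := χ)
    (QuotientAddGroup.mk'_surjective j.range) (fun a => (DFunLike.congr_fun hχ a).symm)
  have hℓ : ∀ b c, coboundary ℓ b c ∈ j.range := fun b c => by
    rw [← QuotientAddGroup.eq_zero_iff]
    show π (coboundary ℓ b c) = 0
    rw [coboundary, map_sub, map_add, hπℓ, hπℓ, hπℓ, map_add, sub_self]
  choose τ hτ using hℓ
  refine ⟨τ, (isSymmCocycle_comp_iff hj).mp ?_, fun a b => hj ?_⟩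
  · simpa only [hτ] using isSymmCocycle_coboundary ℓ
  · rw [hτ, coboundary, ← map_add, hℓi, hℓi, hℓi]
    exact (hφ a b).symm

end

/-- Any symmetric 2-cocycle on a subgroup `H` of an abelian group `G`, with values in an
abelian group `F`, extends to a symmetric 2-cocycle on all of `G`. -/
theorem symmetric_cocycle_extends {G F : Type*} [CommGroup G] [CommGroup F]
    (H : Subgroup G) (τ' : H → H → F)
    (hcoc : ∀ a b c : H, τ' a b * τ' (a * b) c = τ' a (b * c) * τ' b c)
    (hsym : ∀ a b : H, τ' a b = τ' b a) :
    ∃ τ : G → G → F,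
      (∀ a b c : G, τ a b * τ (a * b) c = τ a (b * c) * τ b c) ∧
      (∀ a b : G, τ a b = τ b a) ∧
      (∀ h₁ h₂ : H, τ h₁ h₂ = τ' h₁ h₂) := by
  have hσ : IsSymmCocycle fun a b : Additive H => Additive.ofMul (τ' a.toMul b.toMul) :=
    ⟨fun a b c => congrArg Additive.ofMul (hcoc _ _ _),
      fun a b => congrArg Additive.ofMul (hsym _ _)⟩
  obtain ⟨τ, hτ, hτH⟩ := hσ.exists_extend (i := H.subtype.toAdditive) Subtype.val_injective
  exact ⟨fun a b => (τ (.ofMul a) (.ofMul b)).toMul,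
    fun a b c => congrArg Additive.toMul (hτ.cocycle _ _ _),
    fun a b => congrArg Additive.toMul (hτ.symm _ _),
    fun a b => congrArg Additive.toMul (hτH (.ofMul a) (.ofMul b))⟩
end

section
/- Let G be an abelian group, A = ⊕_{g∈G} A_g a G-graded algebra over a field F whose centroid is spanned by its homogeneous components, and τ : G × G → F^× a symmetric 2-cocycle. Then the map sending a homogeneous centroid element c of degree h to c^τ (where c^τ(x) = τ(h,g)c(x) for x ∈ A_g) is an isomorphism of G-graded algebras from C(A)^τ onto C(A^τ). In particular, for homogeneous c₁ ∈ C(A)_{h₁} and c₂ ∈ C(A)_{h₂}, one has c₁^τ ∘ c₂^τ = τ(h₁,h₂)(c₁∘c₂)^τ. -/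
section

variable {G F M : Type*} [CommGroup G] [Field F] [AddCommGroup M] [Module F M]

/-- `c` belongs to the centroid of the algebra `(M, mul)`. -/
def IsCentroidElem (mul : M →ₗ[F] M →ₗ[F] M) (c : M →ₗ[F] M) : Prop :=
  ∀ x y : M, c (mul x y) = mul (c x) y ∧ c (mul x y) = mul x (c y)

/-- `c` is homogeneous of degree `h` with respect to the grading `𝒜`. -/
def IsHomogOfDeg (𝒜 : G → Submodule F M) (h : G) (c : M →ₗ[F] M) : Prop :=
  ∀ g : G, ∀ x ∈ 𝒜 g, c x ∈ 𝒜 (h * g)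

/-- `cτ` is the τ-twist of the degree-`h` homogeneous centroid element `c`. -/
def IsTwistOf (𝒜 : G → Submodule F M) (τ : G → G → Fˣ) (h : G)
    (c cτ : M →ₗ[F] M) : Prop :=
  ∀ g : G, ∀ x ∈ 𝒜 g, cτ x = (τ h g : F) • c x

/-! On `A_g` the twist `c^τ` of a degree-`h` centroid element is `τ(h,g) • c`. Checked on
homogeneous `x ∈ A_{g₁}`, `y ∈ A_{g₂}`, the identity `c^τ(x ·_τ y) = c^τ(x) ·_τ y` becomes the
cocycle identity `τ(g₁,g₂) τ(h,g₁g₂) = τ(h,g₁) τ(hg₁,g₂)`, and `c^τ(x ·_τ y) = x ·_τ c^τ(y)` the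
same identity read through the symmetry of `τ`. Since `τ` takes unit values, `A` is in turn the
`τ⁻¹`-twist of `A^τ`, so untwisting by `τ⁻¹` inverts `c ↦ c^τ`. Multiplicativity up to
`τ(h₁,h₂)` is the cocycle identity at `(h₁,h₂,g)`. -/

section Grading

theorem IsTwistOf.of_inv {ι : Type*} {𝒜 : ι → Submodule F M} {τ : ι → ι → Fˣ} {h : ι}
    {c cτ : M →ₗ[F] M}
    (htw : IsTwistOf 𝒜 (fun g₁ g₂ => (τ g₁ g₂)⁻¹) h cτ c) : IsTwistOf 𝒜 τ h c cτ :=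
  fun g x hx => by rw [htw g x hx, smul_smul, Units.mul_inv, one_smul]

variable {ι : Type*} [DecidableEq ι] (𝒜 : ι → Submodule F M) [DirectSum.Decomposition 𝒜]

theorem linearMap_ext_of_homogeneous {N : Type*} [AddCommGroup N] [Module F N]
    {f₁ f₂ : M →ₗ[F] N} (H : ∀ i, ∀ x ∈ 𝒜 i, f₁ x = f₂ x) : f₁ = f₂ :=
  DirectSum.decompose_lhom_ext 𝒜 fun i => LinearMap.ext fun x => H i x x.2

theorem isCentroidElem_of_homogeneous {mul : M →ₗ[F] M →ₗ[F] M} {c : M →ₗ[F] M}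
    (H : ∀ i j, ∀ x ∈ 𝒜 i, ∀ y ∈ 𝒜 j,
      c (mul x y) = mul (c x) y ∧ c (mul x y) = mul x (c y)) :
    IsCentroidElem mul c := by
  have hleft : mul.compr₂ c = mul ∘ₗ c :=
    linearMap_ext_of_homogeneous 𝒜 fun i x hx => linearMap_ext_of_homogeneous 𝒜
      fun j y hy => (H i j x hx y hy).1
  have hright : mul.compr₂ c = mul.compl₂ c :=
    linearMap_ext_of_homogeneous 𝒜 fun i x hx => linearMap_ext_of_homogeneous 𝒜
      fun j y hy => (H i j x hx y hy).2
  exact fun x y => ⟨LinearMap.congr_fun₂ hleft x y, LinearMap.congr_fun₂ hright x y⟩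

noncomputable def gradedSMul (σ : ι → F) : M →ₗ[F] M :=
  DirectSum.toModule F ι M (fun i => σ i • (𝒜 i).subtype) ∘ₗ
    (DirectSum.decomposeLinearEquiv 𝒜).toLinearMap

theorem gradedSMul_apply_of_mem (σ : ι → F) {i : ι} {x : M} (hx : x ∈ 𝒜 i) :
    gradedSMul 𝒜 σ x = σ i • x := by
  simp [gradedSMul, DirectSum.decomposeLinearEquiv_apply_coe 𝒜 i ⟨x, hx⟩]

theorem isTwistOf_comp_gradedSMul {τ : ι → ι → Fˣ} (h : ι) (c : M →ₗ[F] M) :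
    IsTwistOf 𝒜 τ h c (c ∘ₗ gradedSMul 𝒜 fun i => (τ h i : F)) :=
  fun i x hx => by rw [LinearMap.comp_apply, gradedSMul_apply_of_mem 𝒜 _ hx, map_smul]

variable {𝒜} in
theorem IsTwistOf.left_unique {τ : ι → ι → Fˣ} {h : ι} {c₁ c₂ cτ : M →ₗ[F] M}
    (ht₁ : IsTwistOf 𝒜 τ h c₁ cτ) (ht₂ : IsTwistOf 𝒜 τ h c₂ cτ) : c₁ = c₂ :=
  linearMap_ext_of_homogeneous 𝒜 fun i x hx =>
    smul_right_injective M (Units.ne_zero (τ h i)) ((ht₁ i x hx).symm.trans (ht₂ i x hx))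

end Grading

section Twist

variable {𝒜 : G → Submodule F M} {τ : G → G → Fˣ}

theorem cocycle_left
    (hcoc : ∀ g₁ g₂ g₃ : G, τ g₁ g₂ * τ (g₁ * g₂) g₃ = τ g₁ (g₂ * g₃) * τ g₂ g₃)
    (h g₁ g₂ : G) : (τ h g₁ : F) * τ (h * g₁) g₂ = τ g₁ g₂ * τ h (g₁ * g₂) := by
  rw [← Units.val_mul, ← Units.val_mul, hcoc, mul_comm]

theorem cocycle_right
    (hcoc : ∀ g₁ g₂ g₃ : G, τ g₁ g₂ * τ (g₁ * g₂) g₃ = τ g₁ (g₂ * g₃) * τ g₂ g₃)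
    (hsym : ∀ g₁ g₂ : G, τ g₁ g₂ = τ g₂ g₁)
    (h g₁ g₂ : G) : (τ h g₂ : F) * τ g₁ (h * g₂) = τ g₁ g₂ * τ h (g₁ * g₂) := by
  rw [hsym g₁ (h * g₂), cocycle_left hcoc, mul_comm g₂ g₁, hsym g₂ g₁]

theorem IsTwistOf.isHomogOfDeg {h : G} {c cτ : M →ₗ[F] M} (htw : IsTwistOf 𝒜 τ h c cτ)
    (hch : IsHomogOfDeg 𝒜 h c) : IsHomogOfDeg 𝒜 h cτ := fun g x hx => by
  rw [htw g x hx]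
  exact Submodule.smul_mem _ _ (hch g x hx)

variable [DecidableEq G] [DirectSum.Decomposition 𝒜]

theorem IsTwistOf.isCentroidElem {mul mulτ : M →ₗ[F] M →ₗ[F] M}
    (hgr : ∀ g₁ g₂ : G, ∀ x ∈ 𝒜 g₁, ∀ y ∈ 𝒜 g₂, mul x y ∈ 𝒜 (g₁ * g₂))
    (hcoc : ∀ g₁ g₂ g₃ : G, τ g₁ g₂ * τ (g₁ * g₂) g₃ = τ g₁ (g₂ * g₃) * τ g₂ g₃)
    (hsym : ∀ g₁ g₂ : G, τ g₁ g₂ = τ g₂ g₁)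
    (hτ : ∀ g₁ g₂ : G, ∀ x ∈ 𝒜 g₁, ∀ y ∈ 𝒜 g₂, mulτ x y = (τ g₁ g₂ : F) • mul x y)
    {h : G} {c cτ : M →ₗ[F] M} (htw : IsTwistOf 𝒜 τ h c cτ) (hc : IsCentroidElem mul c)
    (hch : IsHomogOfDeg 𝒜 h c) : IsCentroidElem mulτ cτ := by
  refine isCentroidElem_of_homogeneous 𝒜 fun g₁ g₂ x hx y hy => ?_
  have htwist_mul : cτ (mulτ x y) = ((τ g₁ g₂ : F) * τ h (g₁ * g₂)) • c (mul x y) := by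
    rw [hτ g₁ g₂ x hx y hy, map_smul, htw _ _ (hgr g₁ g₂ x hx y hy), smul_smul]
  constructor
  · calc cτ (mulτ x y) = ((τ h g₁ : F) * τ (h * g₁) g₂) • mul (c x) y := by
          rw [htwist_mul, cocycle_left hcoc, (hc x y).1]
      _ = mulτ (cτ x) y := by
          rw [htw g₁ x hx, map_smul, LinearMap.smul_apply, hτ _ _ _ (hch g₁ x hx) y hy,
            smul_smul]
  · calc cτ (mulτ x y) = ((τ h g₂ : F) * τ g₁ (h * g₂)) • mul x (c y) := by
          rw [htwist_mul, cocycle_right hcoc hsym, (hc x y).2]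
      _ = mulτ x (cτ y) := by
          rw [htw g₂ y hy, map_smul, hτ _ _ x hx _ (hch g₂ y hy), smul_smul]

theorem exists_isCentroidElem_isTwistOf {mul mulτ : M →ₗ[F] M →ₗ[F] M}
    (hgr : ∀ g₁ g₂ : G, ∀ x ∈ 𝒜 g₁, ∀ y ∈ 𝒜 g₂, mul x y ∈ 𝒜 (g₁ * g₂))
    (hcoc : ∀ g₁ g₂ g₃ : G, τ g₁ g₂ * τ (g₁ * g₂) g₃ = τ g₁ (g₂ * g₃) * τ g₂ g₃)
    (hsym : ∀ g₁ g₂ : G, τ g₁ g₂ = τ g₂ g₁)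
    (hτ : ∀ g₁ g₂ : G, ∀ x ∈ 𝒜 g₁, ∀ y ∈ 𝒜 g₂, mulτ x y = (τ g₁ g₂ : F) • mul x y)
    {h : G} {c' : M →ₗ[F] M} (hc' : IsCentroidElem mulτ c') (hch' : IsHomogOfDeg 𝒜 h c') :
    ∃ c : M →ₗ[F] M, IsCentroidElem mul c ∧ IsHomogOfDeg 𝒜 h c ∧ IsTwistOf 𝒜 τ h c c' := by
  have htw := isTwistOf_comp_gradedSMul 𝒜 (τ := fun g₁ g₂ => (τ g₁ g₂)⁻¹) h c'
  refine ⟨_, htw.isCentroidElem (fun g₁ g₂ x hx y hy => ?_) (fun g₁ g₂ g₃ => ?_)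
    (fun g₁ g₂ => congrArg Inv.inv (hsym g₁ g₂)) (fun g₁ g₂ x hx y hy => ?_) hc' hch',
    htw.isHomogOfDeg hch', htw.of_inv⟩
  · rw [hτ g₁ g₂ x hx y hy]
    exact Submodule.smul_mem _ _ (hgr g₁ g₂ x hx y hy)
  · simp only [← mul_inv, hcoc]
  · rw [hτ g₁ g₂ x hx y hy, smul_smul, Units.inv_mul, one_smul]

theorem IsTwistOf.comp
    (hcoc : ∀ g₁ g₂ g₃ : G, τ g₁ g₂ * τ (g₁ * g₂) g₃ = τ g₁ (g₂ * g₃) * τ g₂ g₃)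
    {h₁ h₂ : G} {c₁ c₂ cτ₁ cτ₂ d : M →ₗ[F] M} (ht₁ : IsTwistOf 𝒜 τ h₁ c₁ cτ₁)
    (ht₂ : IsTwistOf 𝒜 τ h₂ c₂ cτ₂) (hd : IsTwistOf 𝒜 τ (h₁ * h₂) (c₁ ∘ₗ c₂) d)
    (hch₂ : IsHomogOfDeg 𝒜 h₂ c₂) : cτ₁ ∘ₗ cτ₂ = (τ h₁ h₂ : F) • d :=
  linearMap_ext_of_homogeneous 𝒜 fun g x hx => by
    rw [LinearMap.comp_apply, ht₂ g x hx, map_smul, ht₁ _ _ (hch₂ g x hx), smul_smul,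
      LinearMap.smul_apply, hd g x hx, smul_smul, LinearMap.comp_apply, ← Units.val_mul,
      ← Units.val_mul, hcoc, mul_comm]

end Twist

theorem centroid_of_twist_general {G F M : Type*} [CommGroup G] [DecidableEq G] [Field F]
    [AddCommGroup M] [Module F M]
    (𝒜 : G → Submodule F M) [DirectSum.Decomposition 𝒜]
    (mul : M →ₗ[F] M →ₗ[F] M)
    (hgr : ∀ g₁ g₂ : G, ∀ x ∈ 𝒜 g₁, ∀ y ∈ 𝒜 g₂, mul x y ∈ 𝒜 (g₁ * g₂))
    (τ : G → G → Fˣ)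
    (hcoc : ∀ g₁ g₂ g₃ : G, τ g₁ g₂ * τ (g₁ * g₂) g₃ = τ g₁ (g₂ * g₃) * τ g₂ g₃)
    (hsym : ∀ g₁ g₂ : G, τ g₁ g₂ = τ g₂ g₁)
    (mulτ : M →ₗ[F] M →ₗ[F] M)
    (hτ : ∀ g₁ g₂ : G, ∀ x ∈ 𝒜 g₁, ∀ y ∈ 𝒜 g₂,
      mulτ x y = (τ g₁ g₂ : F) • mul x y) :
    -- the map `c ↦ c^τ` sends `C(A)_h` into `C(A^τ)_h` ...
    (∀ (h : G) (c cτ : M →ₗ[F] M), IsCentroidElem mul c → IsHomogOfDeg 𝒜 h c →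
      IsTwistOf 𝒜 τ h c cτ → IsCentroidElem mulτ cτ ∧ IsHomogOfDeg 𝒜 h cτ) ∧
    -- ... injectively ...
    (∀ (h : G) (c₁ c₂ cτ : M →ₗ[F] M), IsCentroidElem mul c₁ → IsCentroidElem mul c₂ →
      IsHomogOfDeg 𝒜 h c₁ → IsHomogOfDeg 𝒜 h c₂ →
      IsTwistOf 𝒜 τ h c₁ cτ → IsTwistOf 𝒜 τ h c₂ cτ → c₁ = c₂) ∧
    -- ... and onto: every homogeneous centroid element of `A^τ` is a twist ...
    (∀ (h : G) (c' : M →ₗ[F] M), IsCentroidElem mulτ c' → IsHomogOfDeg 𝒜 h c' →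
      ∃ c : M →ₗ[F] M, IsCentroidElem mul c ∧ IsHomogOfDeg 𝒜 h c ∧
        IsTwistOf 𝒜 τ h c c') ∧
    -- ... and it is multiplicative up to the twist: `c₁^τ ∘ c₂^τ = τ(h₁,h₂)·(c₁∘c₂)^τ`.
    (∀ (h₁ h₂ : G) (c₁ c₂ cτ₁ cτ₂ d : M →ₗ[F] M),
      IsCentroidElem mul c₁ → IsCentroidElem mul c₂ →
      IsHomogOfDeg 𝒜 h₁ c₁ → IsHomogOfDeg 𝒜 h₂ c₂ →
      IsTwistOf 𝒜 τ h₁ c₁ cτ₁ → IsTwistOf 𝒜 τ h₂ c₂ cτ₂ →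
      IsTwistOf 𝒜 τ (h₁ * h₂) (c₁ ∘ₗ c₂) d →
      cτ₁ ∘ₗ cτ₂ = (τ h₁ h₂ : F) • d) := by
  refine ⟨fun h c cτ hc hch htw => ?_, fun h c₁ c₂ cτ _ _ _ _ ht₁ ht₂ => ?_,
    fun h c' hc' hch' => ?_, fun h₁ h₂ c₁ c₂ cτ₁ cτ₂ d _ _ _ hch₂ ht₁ ht₂ hd => ?_⟩
  · exact ⟨htw.isCentroidElem hgr hcoc hsym hτ hc hch, htw.isHomogOfDeg hch⟩
  · exact ht₁.left_unique ht₂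
  · exact exists_isCentroidElem_isTwistOf hgr hcoc hsym hτ hc' hch'
  · exact ht₁.comp hcoc ht₂ hd hch₂

/-- The map `c ↦ c^τ` is a graded isomorphism `C(A)^τ → C(A^τ)`: it sends
homogeneous centroid elements of `A` of degree `h` to homogeneous centroid elements of
`A^τ` of degree `h`, bijectively, and satisfies `c₁^τ ∘ c₂^τ = τ(h₁,h₂)·(c₁∘c₂)^τ`. -/
theorem centroid_of_twist {G F M : Type*} [CommGroup G] [DecidableEq G] [Field F]
    [AddCommGroup M] [Module F M]
    (𝒜 : G → Submodule F M) [DirectSum.Decomposition 𝒜]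
    (mul : M →ₗ[F] M →ₗ[F] M)
    (hgr : ∀ g₁ g₂ : G, ∀ x ∈ 𝒜 g₁, ∀ y ∈ 𝒜 g₂, mul x y ∈ 𝒜 (g₁ * g₂))
    (hspan : ∀ c : M →ₗ[F] M, IsCentroidElem mul c →
      c ∈ Submodule.span F {c' : M →ₗ[F] M | ∃ h : G,
        IsCentroidElem mul c' ∧ IsHomogOfDeg 𝒜 h c'})
    (τ : G → G → Fˣ)
    (hcoc : ∀ g₁ g₂ g₃ : G, τ g₁ g₂ * τ (g₁ * g₂) g₃ = τ g₁ (g₂ * g₃) * τ g₂ g₃)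
    (hsym : ∀ g₁ g₂ : G, τ g₁ g₂ = τ g₂ g₁)
    (mulτ : M →ₗ[F] M →ₗ[F] M)
    (hτ : ∀ g₁ g₂ : G, ∀ x ∈ 𝒜 g₁, ∀ y ∈ 𝒜 g₂,
      mulτ x y = (τ g₁ g₂ : F) • mul x y) :
    -- the map `c ↦ c^τ` sends `C(A)_h` into `C(A^τ)_h` ...
    (∀ (h : G) (c cτ : M →ₗ[F] M), IsCentroidElem mul c → IsHomogOfDeg 𝒜 h c →
      IsTwistOf 𝒜 τ h c cτ → IsCentroidElem mulτ cτ ∧ IsHomogOfDeg 𝒜 h cτ) ∧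
    -- ... injectively ...
    (∀ (h : G) (c₁ c₂ cτ : M →ₗ[F] M), IsCentroidElem mul c₁ → IsCentroidElem mul c₂ →
      IsHomogOfDeg 𝒜 h c₁ → IsHomogOfDeg 𝒜 h c₂ →
      IsTwistOf 𝒜 τ h c₁ cτ → IsTwistOf 𝒜 τ h c₂ cτ → c₁ = c₂) ∧
    -- ... and onto: every homogeneous centroid element of `A^τ` is a twist ...
    (∀ (h : G) (c' : M →ₗ[F] M), IsCentroidElem mulτ c' → IsHomogOfDeg 𝒜 h c' →
      ∃ c : M →ₗ[F] M, IsCentroidElem mul c ∧ IsHomogOfDeg 𝒜 h c ∧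
        IsTwistOf 𝒜 τ h c c') ∧
    -- ... and it is multiplicative up to the twist: `c₁^τ ∘ c₂^τ = τ(h₁,h₂)·(c₁∘c₂)^τ`.
    (∀ (h₁ h₂ : G) (c₁ c₂ cτ₁ cτ₂ d : M →ₗ[F] M),
      IsCentroidElem mul c₁ → IsCentroidElem mul c₂ →
      IsHomogOfDeg 𝒜 h₁ c₁ → IsHomogOfDeg 𝒜 h₂ c₂ →
      IsTwistOf 𝒜 τ h₁ c₁ cτ₁ → IsTwistOf 𝒜 τ h₂ c₂ cτ₂ →
      IsTwistOf 𝒜 τ (h₁ * h₂) (c₁ ∘ₗ c₂) d →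
      cτ₁ ∘ₗ cτ₂ = (τ h₁ h₂ : F) • d) :=
  centroid_of_twist_general 𝒜 mul hgr τ hcoc hsym mulτ hτ

end
end

section
/- Let G be an abelian group. For any symmetric 2-cocycle τ : G × G → ℝ^× there exists a character χ : G → S¹ (the unit circle in ℂ) such that for any choice of complex numbers z_g with z_g² = χ(g) for all g ∈ G, the map γ : G → ℂ^×, g ↦ z_g, has coboundary dγ taking values in {±1} ⊆ ℝ^×, and τ is cohomologous to dγ in H²_sym(G,ℝ^×). -/
/-!
Complexify `τ`. Since `ℂˣ` is divisible, the abelian extension of `G` by `ℂˣ` defined by a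
symmetric cocycle splits, so `τ = df` for some `f : G → ℂˣ`. As `τ` is real, `df = conj (df)`,
hence `χ := f / conj f` is a character of `G` with values in `S¹`. If `z² = χ` then
`(dz)² = dχ = 1`, and `f / z` is real since its conjugate `conj f · z` equals `f / z`;
therefore `τ = df = dz · d(f / z)`.
-/

open Complex ComplexConjugate

noncomputable instance IsAlgClosed.rootableByUnitsNat {k : Type*} [Field k] [IsAlgClosed k] :
    RootableBy kˣ ℕ :=
  rootableByOfPowLeftSurj _ _ fun {n} hn a => by
    obtain ⟨w, hw⟩ := IsAlgClosed.exists_pow_nat_eq (a : k) (Nat.pos_of_ne_zero hn)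
    refine ⟨Units.mk0 w fun h => a.ne_zero ?_, Units.ext ?_⟩
    · rw [← hw, h, zero_pow hn]
    · simpa using hw

noncomputable instance IsAlgClosed.rootableByUnitsInt {k : Type*} [Field k] [IsAlgClosed k] :
    RootableBy kˣ ℤ :=
  Group.rootableByIntOfRootableByNat _

instance Additive.divisibleByInt {A : Type*} [DivInvMonoid A] [RootableBy A ℤ] :
    DivisibleBy (Additive A) ℤ where
  div a n := .ofMul (RootableBy.root a.toMul n)
  div_zero _ := congrArg Additive.ofMul (RootableBy.root_zero _)
  div_cancel _ hn := congrArg Additive.ofMul (RootableBy.root_cancel _ hn)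

theorem MonoidHom.exists_retraction_of_rootableBy {A E : Type*} [CommGroup A] [RootableBy A ℤ]
    [CommGroup E] (ι : A →* E) (hι : Function.Injective ι) :
    ∃ r : E →* A, r.comp ι = MonoidHom.id A := by
  obtain ⟨r, hr⟩ := (Module.Baer.of_divisible (Additive A)).extension_property_addMonoidHom
    ι.toAdditive hι (AddMonoidHom.id _)
  exact ⟨AddMonoidHom.toMultiplicative r, congrArg AddMonoidHom.toMultiplicative hr⟩

structure SymmCocycle (G A : Type*) [Mul G] [CommGroup A] where
  toFun : G → G → A
  cocycle (g h k : G) : toFun g h * toFun (g * h) k = toFun g (h * k) * toFun h k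
  symm (g h : G) : toFun g h = toFun h g

namespace SymmCocycle

variable {G A B : Type*} [CommGroup A] [CommGroup B]

section Mul

variable [Mul G]

instance : CoeFun (SymmCocycle G A) fun _ => G → G → A := ⟨toFun⟩

def map (σ : SymmCocycle G A) (φ : A →* B) : SymmCocycle G B where
  toFun g h := φ (σ g h)
  cocycle g h k := by simp only [← map_mul, σ.cocycle]
  symm g h := by rw [σ.symm]

end Mul

section CommGroup

variable [CommGroup G] (σ : SymmCocycle G A)

theorem one_left (g : G) : σ 1 g = σ 1 1 := by
  simpa using (σ.cocycle 1 1 g).symm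

theorem one_right (g : G) : σ g 1 = σ 1 1 := by
  rw [σ.symm, one_left]

@[ext]
structure Extension (σ : SymmCocycle G A) where
  base : G
  fiber : A

variable {σ}

instance : Mul σ.Extension := ⟨fun x y => ⟨x.base * y.base, σ x.base y.base * x.fiber * y.fiber⟩⟩

-- `σ` is not normalised, so the identity sits over `1` at height `(σ 1 1)⁻¹`.
instance : One σ.Extension := ⟨⟨1, (σ 1 1)⁻¹⟩⟩

instance : Inv σ.Extension := ⟨fun x => ⟨x.base⁻¹, (σ x.base x.base⁻¹ * σ 1 1 * x.fiber)⁻¹⟩⟩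

@[simp] theorem mul_base (x y : σ.Extension) : (x * y).base = x.base * y.base := rfl

@[simp] theorem mul_fiber (x y : σ.Extension) :
    (x * y).fiber = σ x.base y.base * x.fiber * y.fiber := rfl

@[simp] theorem one_base : (1 : σ.Extension).base = 1 := rfl

@[simp] theorem one_fiber : (1 : σ.Extension).fiber = (σ 1 1)⁻¹ := rfl

@[simp] theorem inv_base (x : σ.Extension) : x⁻¹.base = x.base⁻¹ := rfl

@[simp] theorem inv_fiber (x : σ.Extension) :
    x⁻¹.fiber = (σ x.base x.base⁻¹ * σ 1 1 * x.fiber)⁻¹ := rfl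

instance : CommGroup σ.Extension where
  mul_assoc x y z := by
    have := σ.cocycle x.base y.base z.base
    ext <;> simp <;> grind
  one_mul x := by
    ext <;> simp [σ.one_left]
  mul_one x := by
    ext <;> simp [σ.one_right, mul_right_comm _ x.fiber]
  inv_mul_cancel x := by
    ext <;> simp [σ.symm x.base⁻¹ x.base, mul_assoc, mul_left_comm]
  mul_comm x y := by
    have := σ.symm x.base y.base
    ext <;> simp <;> grind

variable (σ)

def inclusion : A →* σ.Extension where
  toFun a := ⟨1, (σ 1 1)⁻¹ * a⟩
  map_one' := by ext <;> simp
  map_mul' a b := by ext <;> simp; grind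

theorem inclusion_injective : Function.Injective σ.inclusion := fun a b h => by
  simpa [inclusion] using congrArg Extension.fiber h

theorem exists_coboundary [RootableBy A ℤ] :
    ∃ f : G → A, ∀ g h, σ g h = f g * f h / f (g * h) := by
  obtain ⟨r, hr⟩ := σ.inclusion.exists_retraction_of_rootableBy σ.inclusion_injective
  refine ⟨fun g => r ⟨g, 1⟩, fun g h => eq_div_of_mul_eq' ?_⟩
  have hsplit : (⟨g, 1⟩ : σ.Extension) * ⟨h, 1⟩ = σ.inclusion (σ g h) * ⟨g * h, 1⟩ := by
    ext <;> simp [inclusion, σ.one_left]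
  simpa [← MonoidHom.comp_apply, hr] using (congrArg r hsplit).symm

end CommGroup

end SymmCocycle

section

variable {G : Type*} [CommGroup G]

noncomputable def divConjHom (f : G → ℂˣ) (τ : G → G → ℝ)
    (hτ : ∀ g h, (τ g h : ℂ) = f g * f h / f (g * h)) : G →* Circle :=
  MonoidHom.mk' (fun g => Circle.ofConjDivSelf (conj (f g)) (by simp)) fun g h => by
    have hreal := hτ g h
    have hconj := congrArg conj hreal
    ext
    simp at hreal hconj ⊢
    field_simp at hreal hconj ⊢
    linear_combination (conj (f (g * h) : ℂ)) * hreal - (f (g * h) : ℂ) * hconj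

theorem coboundary_eq_one_or_eq_neg_one {K : Type*} [Field K] (χ : G →* K) (z : G → K)
    (hz : ∀ g, z g ^ 2 = χ g) (g h : G) :
    z g * z h * (z (g * h))⁻¹ = 1 ∨ z g * z h * (z (g * h))⁻¹ = -1 := by
  rw [← sq_eq_one_iff, mul_pow, mul_pow, inv_pow, hz, hz, hz, ← map_mul]
  exact mul_inv_cancel₀ ((Group.isUnit (g * h)).map χ).ne_zero

end

theorem ofReal_re_div_eq_of_sq_eq_div_conj {w z : ℂ} (hw : w ≠ 0) (hz : z ^ 2 = w / conj w) :
    ((w / z).re : ℂ) = w / z := by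
  rw [← conj_eq_iff_re]
  have hz0 : z ≠ 0 := by
    rintro rfl
    simp [eq_comm (a := (0 : ℂ)), hw] at hz
  have hnorm : z * conj z = 1 := by
    rw [mul_conj, normSq_eq_norm_sq, ← norm_pow, hz, norm_div, Complex.norm_conj,
      div_self (norm_ne_zero_iff.mpr hw)]
    simp
  rw [map_div₀, eq_inv_of_mul_eq_one_right hnorm, div_inv_eq_mul, eq_div_iff hz0]
  rw [eq_div_iff (by simpa using hw)] at hz
  linear_combination hz

/-- For any symmetric 2-cocycle `τ : G × G → ℝ^×` there is a character `χ : G → S¹` such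
that, for any choice of square roots `z_g` of `χ(g)`, the coboundary of `γ : g ↦ z_g`
takes values in `{±1} ⊆ ℝ^×` and is cohomologous to `τ` in `H²_sym(G,ℝ^×)`. -/
theorem real_symmetric_cocycle_from_character {G : Type*} [CommGroup G]
    (τ : G → G → ℝˣ)
    (hcoc : ∀ g₁ g₂ g₃ : G, τ g₁ g₂ * τ (g₁ * g₂) g₃ = τ g₁ (g₂ * g₃) * τ g₂ g₃)
    (hsym : ∀ g₁ g₂ : G, τ g₁ g₂ = τ g₂ g₁) :
    ∃ χ : G →* Circle, ∀ z : G → ℂ, (∀ g : G, z g ^ 2 = (χ g : ℂ)) →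
      (∀ g₁ g₂ : G, z g₁ * z g₂ * (z (g₁ * g₂))⁻¹ = 1 ∨
        z g₁ * z g₂ * (z (g₁ * g₂))⁻¹ = -1) ∧
      ∃ η : G → ℝˣ, ∀ g₁ g₂ : G,
        ((τ g₁ g₂ : ℝ) : ℂ) = (z g₁ * z g₂ * (z (g₁ * g₂))⁻¹) *
          (((η g₁ * η g₂ * (η (g₁ * g₂))⁻¹ : ℝˣ) : ℝ) : ℂ) := by
  obtain ⟨f, hf⟩ := (SymmCocycle.mk τ hcoc hsym).map (Units.map ofRealHom.toMonoidHom)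
    |>.exists_coboundary
  have hτ (g h : G) : ((τ g h : ℝ) : ℂ) = f g * f h / f (g * h) := by
    simpa [SymmCocycle.map] using congrArg Units.val (hf g h)
  refine ⟨divConjHom f (fun g h => τ g h) hτ, fun z hz => ⟨fun g h =>
    coboundary_eq_one_or_eq_neg_one (Circle.coeHom.comp (divConjHom f _ hτ)) z hz g h, ?_⟩⟩
  have hz0 (g : G) : z g ≠ 0 := by
    intro h0
    simpa [h0] using (hz g).symm
  have hre (g : G) : (((f g / z g).re : ℝ) : ℂ) = f g / z g :=
    ofReal_re_div_eq_of_sq_eq_div_conj (f g).ne_zero (by simpa [divConjHom] using hz g)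
  have hre0 (g : G) : (f g / z g).re ≠ 0 := by
    exact_mod_cast (hre g).trans_ne (div_ne_zero (f g).ne_zero (hz0 g))
  refine ⟨fun g => Units.mk0 _ (hre0 g), fun g h => ?_⟩
  simp only [Units.val_mul, Units.val_inv_eq_inv_val, Units.val_mk0]
  push_cast
  rw [hτ, hre, hre, hre]
  field_simp [hz0]
end

section
/- Let G be an abelian group, H a subgroup, π : G → Ḡ = G/H the projection, A a Ḡ-graded algebra over a field F, and τ : G × G → F^× a symmetric 2-cocycle whose restriction to H × H is trivial modulo coboundaries pulled back from Ḡ in the following sense: τ = μ∘(π×π) for some symmetric 2-cocycle μ on Ḡ. Then the twisted loop algebra L_π^τ(A) is isomorphic as a G-graded algebra to the (untwisted) loop algebra L_π(A^μ) of the μ-twist of A. -/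
open DirectSum

/-!
Once `τ = μ ∘ (π × π)`, the products of `x ⊗ g₁` and `y ⊗ g₂` in `L_π^τ(A)` and in `L_π(A^μ)`
are both `μ(π g₁, π g₂) xy ⊗ g₁g₂`. A bilinear map on a direct sum is determined by its values
on pairs of homogeneous elements, so the two multiplications coincide and the identity is a graded
isomorphism.
-/

section TwistedGradedMul

variable {ι R M : Type*} [DecidableEq ι] [Mul ι] [CommSemiring R] [AddCommMonoid M] [Module R M]

def IsTwistedGradedMul (V : ι → Submodule R M) (mul : M →ₗ[R] M →ₗ[R] M) (c : ι → ι → R)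
    (m : (⨁ i, V i) →ₗ[R] (⨁ i, V i) →ₗ[R] (⨁ i, V i)) : Prop :=
  ∀ (i j : ι) (x : V i) (y : V j) (z : V (i * j)), (z : M) = c i j • mul x y →
    m (of (fun i => V i) i x) (of (fun i => V i) j y) = of (fun i => V i) (i * j) z

theorem IsTwistedGradedMul.unique {V : ι → Submodule R M} {mul : M →ₗ[R] M →ₗ[R] M}
    {c : ι → ι → R} {m₁ m₂ : (⨁ i, V i) →ₗ[R] (⨁ i, V i) →ₗ[R] (⨁ i, V i)}
    (h₁ : IsTwistedGradedMul V mul c m₁) (h₂ : IsTwistedGradedMul V mul c m₂)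
    (hV : ∀ i j, ∀ x ∈ V i, ∀ y ∈ V j, mul x y ∈ V (i * j)) : m₁ = m₂ := by
  ext i x j y : 4
  let z : V (i * j) := ⟨c i j • mul x y, Submodule.smul_mem _ _ (hV i j x x.2 y y.2)⟩
  exact (h₁ i j x y z rfl).trans (h₂ i j x y z rfl).symm

end TwistedGradedMul

theorem twisted_loop_iso_loop_of_twist_general {G F M : Type*} [CommGroup G] [DecidableEq G]
    [Field F] [AddCommGroup M] [Module F M]
    (H : Subgroup G) (𝒜 : G ⧸ H → Submodule F M)
    (mul : M →ₗ[F] M →ₗ[F] M)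
    (hgr : ∀ a b : G ⧸ H, ∀ x ∈ 𝒜 a, ∀ y ∈ 𝒜 b, mul x y ∈ 𝒜 (a * b))
    (μ : G ⧸ H → G ⧸ H → Fˣ)
    (τ : G → G → Fˣ)
    (hτμ : ∀ g₁ g₂ : G, τ g₁ g₂ = μ (g₁ : G ⧸ H) (g₂ : G ⧸ H))
    -- the multiplication of the τ-twisted loop algebra `L_π^τ(A)`:
    (mulLτ : (⨁ g : G, 𝒜 (g : G ⧸ H)) →ₗ[F] (⨁ g : G, 𝒜 (g : G ⧸ H)) →ₗ[F]
      (⨁ g : G, 𝒜 (g : G ⧸ H)))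
    (hLτ : ∀ (g₁ g₂ : G) (x : 𝒜 (g₁ : G ⧸ H)) (y : 𝒜 (g₂ : G ⧸ H))
      (z : 𝒜 ((g₁ * g₂ : G) : G ⧸ H)), (z : M) = (τ g₁ g₂ : F) • mul x y →
      mulLτ (DirectSum.of (fun g : G => 𝒜 (g : G ⧸ H)) g₁ x)
          (DirectSum.of (fun g : G => 𝒜 (g : G ⧸ H)) g₂ y) =
        DirectSum.of (fun g : G => 𝒜 (g : G ⧸ H)) (g₁ * g₂) z)
    -- the multiplication of the untwisted loop algebra `L_π(A^μ)`:
    (mulLμ : (⨁ g : G, 𝒜 (g : G ⧸ H)) →ₗ[F] (⨁ g : G, 𝒜 (g : G ⧸ H)) →ₗ[F]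
      (⨁ g : G, 𝒜 (g : G ⧸ H)))
    (hLμ : ∀ (g₁ g₂ : G) (x : 𝒜 (g₁ : G ⧸ H)) (y : 𝒜 (g₂ : G ⧸ H))
      (z : 𝒜 ((g₁ * g₂ : G) : G ⧸ H)),
      (z : M) = (μ (g₁ : G ⧸ H) (g₂ : G ⧸ H) : F) • mul x y →
      mulLμ (DirectSum.of (fun g : G => 𝒜 (g : G ⧸ H)) g₁ x)
          (DirectSum.of (fun g : G => 𝒜 (g : G ⧸ H)) g₂ y) =
        DirectSum.of (fun g : G => 𝒜 (g : G ⧸ H)) (g₁ * g₂) z) :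
    ∃ φ : (⨁ g : G, 𝒜 (g : G ⧸ H)) ≃ₗ[F] (⨁ g : G, 𝒜 (g : G ⧸ H)),
      (∀ (g : G) (x : 𝒜 (g : G ⧸ H)), ∃ y : 𝒜 (g : G ⧸ H),
        φ (DirectSum.of (fun g : G => 𝒜 (g : G ⧸ H)) g x) =
          DirectSum.of (fun g : G => 𝒜 (g : G ⧸ H)) g y) ∧
      (∀ a b : ⨁ g : G, 𝒜 (g : G ⧸ H), φ (mulLτ a b) = mulLμ (φ a) (φ b)) := by
  have hτ : IsTwistedGradedMul (fun g : G => 𝒜 g) mul (fun g₁ g₂ => (μ g₁ g₂ : F)) mulLτ :=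
    fun g₁ g₂ x y z hz => hLτ g₁ g₂ x y z (by rwa [hτμ])
  have hmul : mulLτ = mulLμ := hτ.unique hLμ fun g₁ g₂ => hgr g₁ g₂
  exact ⟨LinearEquiv.refl F _, fun g x => ⟨x, rfl⟩, fun a b => by rw [hmul]; rfl⟩

/-- If `τ = μ∘(π×π)` for a symmetric 2-cocycle `μ` on `Ḡ = G/H`, then the twisted loop
algebra `L_π^τ(A)` is graded-isomorphic to the untwisted loop algebra `L_π(A^μ)`.
The loop algebra `L_π(A) = ⊕_{g∈G} A_{π(g)} ⊗ g` is modelled as `⨁ (g : G), A_{π(g)}`. -/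
theorem twisted_loop_iso_loop_of_twist {G F M : Type*} [CommGroup G] [DecidableEq G]
    [Field F] [AddCommGroup M] [Module F M]
    (H : Subgroup G) (𝒜 : G ⧸ H → Submodule F M)
    (mul : M →ₗ[F] M →ₗ[F] M)
    (hgr : ∀ a b : G ⧸ H, ∀ x ∈ 𝒜 a, ∀ y ∈ 𝒜 b, mul x y ∈ 𝒜 (a * b))
    (μ : G ⧸ H → G ⧸ H → Fˣ)
    (hμcoc : ∀ a b c : G ⧸ H, μ a b * μ (a * b) c = μ a (b * c) * μ b c)
    (hμsym : ∀ a b : G ⧸ H, μ a b = μ b a)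
    (τ : G → G → Fˣ)
    (hτμ : ∀ g₁ g₂ : G, τ g₁ g₂ = μ (g₁ : G ⧸ H) (g₂ : G ⧸ H))
    -- the multiplication of the τ-twisted loop algebra `L_π^τ(A)`:
    (mulLτ : (⨁ g : G, 𝒜 (g : G ⧸ H)) →ₗ[F] (⨁ g : G, 𝒜 (g : G ⧸ H)) →ₗ[F]
      (⨁ g : G, 𝒜 (g : G ⧸ H)))
    (hLτ : ∀ (g₁ g₂ : G) (x : 𝒜 (g₁ : G ⧸ H)) (y : 𝒜 (g₂ : G ⧸ H))
      (z : 𝒜 ((g₁ * g₂ : G) : G ⧸ H)), (z : M) = (τ g₁ g₂ : F) • mul x y →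
      mulLτ (DirectSum.of (fun g : G => 𝒜 (g : G ⧸ H)) g₁ x)
          (DirectSum.of (fun g : G => 𝒜 (g : G ⧸ H)) g₂ y) =
        DirectSum.of (fun g : G => 𝒜 (g : G ⧸ H)) (g₁ * g₂) z)
    -- the multiplication of the untwisted loop algebra `L_π(A^μ)`:
    (mulLμ : (⨁ g : G, 𝒜 (g : G ⧸ H)) →ₗ[F] (⨁ g : G, 𝒜 (g : G ⧸ H)) →ₗ[F]
      (⨁ g : G, 𝒜 (g : G ⧸ H)))
    (hLμ : ∀ (g₁ g₂ : G) (x : 𝒜 (g₁ : G ⧸ H)) (y : 𝒜 (g₂ : G ⧸ H))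
      (z : 𝒜 ((g₁ * g₂ : G) : G ⧸ H)),
      (z : M) = (μ (g₁ : G ⧸ H) (g₂ : G ⧸ H) : F) • mul x y →
      mulLμ (DirectSum.of (fun g : G => 𝒜 (g : G ⧸ H)) g₁ x)
          (DirectSum.of (fun g : G => 𝒜 (g : G ⧸ H)) g₂ y) =
        DirectSum.of (fun g : G => 𝒜 (g : G ⧸ H)) (g₁ * g₂) z) :
    ∃ φ : (⨁ g : G, 𝒜 (g : G ⧸ H)) ≃ₗ[F] (⨁ g : G, 𝒜 (g : G ⧸ H)),
      (∀ (g : G) (x : 𝒜 (g : G ⧸ H)), ∃ y : 𝒜 (g : G ⧸ H),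
        φ (DirectSum.of (fun g : G => 𝒜 (g : G ⧸ H)) g x) =
          DirectSum.of (fun g : G => 𝒜 (g : G ⧸ H)) g y) ∧
      (∀ a b : ⨁ g : G, 𝒜 (g : G ⧸ H), φ (mulLτ a b) = mulLμ (φ a) (φ b)) :=
  twisted_loop_iso_loop_of_twist_general H 𝒜 mul hgr μ τ hτμ mulLτ hLτ mulLμ hLμ
end
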